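/- (Lemma: PAC bound on the composed CDF) Let A and B be real-valued random variables with CDFs Φ_A and Φ_B. Let {A_i}_{i=1}^n be i.i.d. samples with CDF Φ_A and {B_i}_{i=1}^n be i.i.d. samples with CDF Φ_B, with empirical CDFs Φ_A⁽ⁿ⁾ and Φ_B⁽ⁿ⁾. Let p ∈ (0,1), α ∈ (0,1), and ε(α,n) = √(ln(2/α)/(2n)). Then with probability at least 1 − 2α: v̲(p,α,n) ≤ Φ_B(Φ_A^{-1}(p)) ≤ v̄(p,α,n), where v̲(p,α,n) = Φ_B⁽ⁿ⁾((Φ_A⁽ⁿ⁾ + ε(α,n))^{-1}(p)) − ε(α,n) and v̄(p,α,n) = Φ_B⁽ⁿ⁾((Φ_A⁽ⁿ⁾ − ε(α,n))^{-1}(p)) + ε(α,n). -/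

import Mathlib

open MeasureTheory

/-- The generalized inverse `H⁻¹(p) = inf {x : ℝ | H x ≥ p}` of a function `H : ℝ → ℝ`,
valued in the extended reals so that the convention `inf ∅ = +∞` holds. -/
noncomputable def geninvE (H : ℝ → ℝ) (p : ℝ) : EReal :=
  sInf ((fun x : ℝ => (x : EReal)) '' {x : ℝ | p ≤ H x})

/-- Evaluation of a (bounded, nondecreasing) function `H : ℝ → ℝ` at an extended real:
at a finite point it is `H` itself, at `-∞` it is `inf (range H)` and at `+∞` it is
`sup (range H)` (the natural monotone extension). -/
noncomputable def evalE (H : ℝ → ℝ) (x : EReal) : ℝ :=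
  if x = ⊥ then sInf (Set.range H) else if x = ⊤ then sSup (Set.range H) else H x.toReal

/-- The empirical CDF of the samples `X 0, …, X (n-1)` evaluated at the outcome `ω` and
the point `x`: `Φ⁽ⁿ⁾(x) = (1/n) ∑_{i=1}^n 1[X i ≤ x]`. -/
noncomputable def empCDF {Ω : Type*} (n : ℕ) (X : Fin n → Ω → ℝ) (ω : Ω) (x : ℝ) : ℝ :=
  (n : ℝ)⁻¹ * ∑ i : Fin n, if X i ω ≤ x then (1 : ℝ) else 0

/-!
The quantile `q = ΦA⁻¹(p)` is finite, with `p ≤ ΦA q` and `ΦA x < p` for `x < q`, hence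
`P(A < q) ≤ p`. Hoeffding's inequality at the single point `q` bounds four one-sided deviations,
each by `exp (-2 n ε²) = α / 2`. Outside them, `p ≤ ΦA⁽ⁿ⁾(q) + ε`, so `(ΦA⁽ⁿ⁾ + ε)⁻¹(p) ≤ q`;
the empirical frequency of `{A_i < q}` is below `p + ε`, so `ΦA⁽ⁿ⁾ - ε < p` left of `q` and
`q ≤ (ΦA⁽ⁿ⁾ - ε)⁻¹(p)`; and `|ΦB⁽ⁿ⁾(q) - ΦB(q)| < ε`. Monotonicity of `ΦB⁽ⁿ⁾` then sandwiches
`ΦB(ΦA⁻¹(p)) = ΦB(q)`; no uniform (DKW) band is needed.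
-/

open Set Real ProbabilityTheory

section Hoeffding

variable {Ω : Type*} [MeasurableSpace Ω] {μ : Measure Ω} [IsProbabilityMeasure μ]

theorem measureReal_le_sum_sub_integral_le {ι : Type*} [Fintype ι] {Y : ι → Ω → ℝ}
    (hY : ∀ i, AEMeasurable (Y i) μ) (hind : iIndepFun Y μ) {a b : ℝ}
    (hab : ∀ i, ∀ᵐ ω ∂μ, Y i ω ∈ Icc a b) {t : ℝ} (ht : 0 ≤ t) :
    μ.real {ω | t ≤ ∑ i, (Y i ω - μ[Y i])} ≤
      exp (-2 * t ^ 2 / (Fintype.card ι * (b - a) ^ 2)) := by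
  have hcent : iIndepFun (fun i ω => Y i ω - μ[Y i]) μ :=
    hind.comp (fun i x => x - ∫ ω, Y i ω ∂μ) fun i => measurable_id.sub_const _
  refine (HasSubgaussianMGF.measure_sum_ge_le_of_iIndepFun hcent
    (fun i _ => hasSubgaussianMGF_of_mem_Icc (hY i) (hab i)) ht).trans_eq ?_
  congr 1
  push_cast
  rw [Finset.sum_const, Finset.card_univ, nsmul_eq_mul, Real.norm_eq_abs, div_pow, sq_abs,
    show (2 : ℝ) * (Fintype.card ι * ((b - a) ^ 2 / 2 ^ 2)) = Fintype.card ι * (b - a) ^ 2 / 2 by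
      ring, div_div_eq_mul_div]
  ring

end Hoeffding

noncomputable def empFreq {Ω : Type*} (n : ℕ) (X : Fin n → Ω → ℝ) (ω : Ω) (S : Set ℝ) : ℝ :=
  (n : ℝ)⁻¹ * ∑ i, S.indicator 1 (X i ω)

section EmpiricalFrequency

variable {Ω : Type*} {n : ℕ} {X : Fin n → Ω → ℝ} {ω : Ω}

theorem empCDF_eq_empFreq (x : ℝ) : empCDF n X ω x = empFreq n X ω (Iic x) := by
  simp [empCDF, empFreq, indicator]

theorem empFreq_mono : Monotone (empFreq n X ω) := fun S T hST =>
  mul_le_mul_of_nonneg_left (Finset.sum_le_sum fun i _ =>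
    indicator_le_indicator_of_subset hST (fun _ => zero_le_one) (X i ω)) (by positivity)

theorem empFreq_mem_Icc (S : Set ℝ) : empFreq n X ω S ∈ Icc 0 1 := by
  have hS : empFreq n X ω S ≤ empFreq n X ω univ := empFreq_mono (subset_univ S)
  refine ⟨le_trans ?_ (empFreq_mono (empty_subset S)), hS.trans ?_⟩
  · simp [empFreq]
  · rcases eq_or_ne n 0 with rfl | hn
    · simp [empFreq]
    · simp [empFreq, hn]

theorem empFreq_compl (hn : n ≠ 0) (S : Set ℝ) :
    empFreq n X ω Sᶜ = 1 - empFreq n X ω S := by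
  simp only [empFreq, indicator_compl]
  simp [mul_sub, hn]

theorem empCDF_mono : Monotone (empCDF n X ω) := fun x y hxy => by
  simpa only [empCDF_eq_empFreq] using empFreq_mono (Iic_subset_Iic.mpr hxy)

theorem bddBelow_range_empCDF : BddBelow (range (empCDF n X ω)) :=
  ⟨0, forall_mem_range.mpr fun x => (empCDF_eq_empFreq x ▸ empFreq_mem_Icc (Iic x)).1⟩

theorem bddAbove_range_empCDF : BddAbove (range (empCDF n X ω)) :=
  ⟨1, forall_mem_range.mpr fun x => (empCDF_eq_empFreq x ▸ empFreq_mem_Icc (Iic x)).2⟩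

end EmpiricalFrequency

section Concentration

variable {Ω : Type*} [MeasurableSpace Ω] {μ : Measure Ω} [IsProbabilityMeasure μ] {n : ℕ}
  {X : Fin n → Ω → ℝ} {S : Set ℝ} {c ε : ℝ}

omit [IsProbabilityMeasure μ] in
theorem integral_indicator_one_comp {Y : Ω → ℝ} (hY : Measurable Y) (hS : MeasurableSet S) :
    ∫ ω, S.indicator 1 (Y ω) ∂μ = μ.real (Y ⁻¹' S) := by
  simp_rw [← indicator_comp_right Y]
  exact integral_indicator_one (hY hS)

theorem measure_le_empFreq_sub_le (hX : ∀ i, Measurable (X i)) (hind : iIndepFun X μ)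
    (hS : MeasurableSet S) (hc : ∀ i, μ.real (X i ⁻¹' S) ≤ c) (hn : n ≠ 0) (hε : 0 ≤ ε) :
    μ {ω | ε ≤ empFreq n X ω S - c} ≤ ENNReal.ofReal (exp (-2 * n * ε ^ 2)) := by
  set Y : Fin n → Ω → ℝ := fun i ω => S.indicator 1 (X i ω)
  have hnR : (0 : ℝ) < n := Nat.cast_pos.mpr (Nat.pos_of_ne_zero hn)
  have hsub : {ω | ε ≤ empFreq n X ω S - c} ⊆ {ω | n * ε ≤ ∑ i, (Y i ω - μ[Y i])} := by
    intro ω hω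
    have hmean : ∑ i, μ[Y i] ≤ n * c := calc
      ∑ i, μ[Y i] = ∑ i, μ.real (X i ⁻¹' S) :=
        Finset.sum_congr rfl fun i _ => integral_indicator_one_comp (hX i) hS
      _ ≤ ∑ _i : Fin n, c := Finset.sum_le_sum fun i _ => hc i
      _ = n * c := by simp
    have hsum : ∑ i, Y i ω = n * empFreq n X ω S := by
      rw [empFreq, mul_inv_cancel_left₀ hnR.ne']
    simp only [mem_ofPred_eq, Finset.sum_sub_distrib, hsum] at hω ⊢
    nlinarith
  have hY : iIndepFun Y μ :=
    hind.comp (fun _ => S.indicator 1) fun _ => measurable_const.indicator hS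
  have hbound := measureReal_le_sum_sub_integral_le (Y := Y) (a := 0) (b := 1)
    (fun i => ((measurable_const.indicator hS).comp (hX i)).aemeasurable) hY
    (fun i => ae_of_all _ fun ω => ⟨indicator_nonneg (fun _ _ => zero_le_one) _,
      indicator_le_self' (fun _ _ => zero_le_one) _⟩) (by positivity : 0 ≤ (n : ℝ) * ε)
  calc μ {ω | ε ≤ empFreq n X ω S - c}
      ≤ μ {ω | n * ε ≤ ∑ i, (Y i ω - μ[Y i])} := measure_mono hsub
    _ = ENNReal.ofReal (μ.real {ω | n * ε ≤ ∑ i, (Y i ω - μ[Y i])}) :=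
      (ofReal_measureReal (measure_ne_top _ _)).symm
    _ ≤ ENNReal.ofReal (exp (-2 * n * ε ^ 2)) := by
      refine ENNReal.ofReal_le_ofReal (hbound.trans_eq ?_)
      rw [Fintype.card_fin, sub_zero, one_pow, mul_one]
      field_simp

theorem measure_le_sub_empFreq_le (hX : ∀ i, Measurable (X i)) (hind : iIndepFun X μ)
    (hS : MeasurableSet S) (hc : ∀ i, c ≤ μ.real (X i ⁻¹' S)) (hn : n ≠ 0) (hε : 0 ≤ ε) :
    μ {ω | ε ≤ c - empFreq n X ω S} ≤ ENNReal.ofReal (exp (-2 * n * ε ^ 2)) := by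
  have hcompl : ∀ i, μ.real (X i ⁻¹' Sᶜ) ≤ 1 - c := fun i => by
    rw [preimage_compl, measureReal_compl (hX i hS), probReal_univ]
    linarith [hc i]
  simpa only [empFreq_compl hn, sub_sub_sub_cancel_left] using
    measure_le_empFreq_sub_le hX hind hS.compl hcompl hn hε

end Concentration

theorem evalE_coe (H : ℝ → ℝ) (x : ℝ) : evalE H x = H x := by
  simp [evalE]

theorem evalE_le_of_le_coe {H : ℝ → ℝ} (hH : Monotone H) (hb : BddBelow (range H)) {x : EReal}
    {y : ℝ} (h : x ≤ y) : evalE H x ≤ H y := by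
  induction x using EReal.rec with
  | bot => simpa [evalE] using csInf_le hb (mem_range_self y)
  | coe x => simpa [evalE_coe] using hH (EReal.coe_le_coe_iff.mp h)
  | top => simp at h

theorem le_evalE_of_coe_le {H : ℝ → ℝ} (hH : Monotone H) (hb : BddAbove (range H)) {x : EReal}
    {y : ℝ} (h : (y : EReal) ≤ x) : H y ≤ evalE H x := by
  induction x using EReal.rec with
  | bot => simp at h
  | coe x => simpa [evalE_coe] using hH (EReal.coe_le_coe_iff.mp h)
  | top => simpa [evalE] using le_csSup hb (mem_range_self y)

theorem geninvE_le_coe {H : ℝ → ℝ} {p x : ℝ} (h : p ≤ H x) : geninvE H p ≤ x :=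
  sInf_le (mem_image_of_mem _ h)

theorem coe_le_geninvE {H : ℝ → ℝ} {p y : ℝ} (h : ∀ x < y, H x < p) : (y : EReal) ≤ geninvE H p :=
  le_sInf <| forall_mem_image.mpr fun x hx =>
    EReal.coe_le_coe_iff.mpr (not_lt.mp fun hxy => (h x hxy).not_ge hx)

theorem exists_geninvE_cdf_eq_coe (ν : Measure ℝ) [IsProbabilityMeasure ν] {p : ℝ}
    (hp : p ∈ Ioo 0 1) :
    ∃ q : ℝ, geninvE (cdf ν) p = q ∧ p ≤ cdf ν q ∧ ∀ x < q, cdf ν x < p := by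
  set T := {x | p ≤ cdf ν x}
  obtain ⟨a, ha⟩ := ((tendsto_cdf_atBot ν).eventually (eventually_lt_nhds hp.1)).exists
  obtain ⟨b, hb⟩ := ((tendsto_cdf_atTop ν).eventually (eventually_gt_nhds hp.2)).exists
  have hbdd : BddBelow T := ⟨a, fun x hx => ((monotone_cdf ν).reflect_lt (ha.trans_le hx)).le⟩
  have hlt : ∀ x < sInf T, cdf ν x < p := fun x hx =>
    not_le.mp fun h => hx.not_ge (csInf_le hbdd h)
  have hmem : p ≤ cdf ν (sInf T) := by
    refine ge_of_tendsto (((cdf ν).right_continuous _).mono Ioi_subset_Ici_self) ?_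
    refine eventually_nhdsWithin_of_forall fun x hx => ?_
    obtain ⟨y, hyT, hyx⟩ := (csInf_lt_iff hbdd ⟨b, hb.le⟩).mp hx
    exact hyT.trans (monotone_cdf ν hyx.le)
  exact ⟨sInf T, le_antisymm (geninvE_le_coe hmem) (coe_le_geninvE hlt), hmem, hlt⟩

theorem measure_Iio_le_of_forall_lt_cdf_le (ν : Measure ℝ) [IsProbabilityMeasure ν] {p q : ℝ}
    (h : ∀ x < q, cdf ν x ≤ p) : ν (Iio q) ≤ ENNReal.ofReal p := by
  have hleft : Function.leftLim (cdf ν) q ≤ p := by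
    rw [(monotone_cdf ν).leftLim_eq_sSup]
    exact csSup_le (nonempty_Iio.image _) (forall_mem_image.mpr h)
  calc ν (Iio q) = (cdf ν).measure (Iio q) := by rw [measure_cdf]
    _ = ENNReal.ofReal (Function.leftLim (cdf ν) q) := by
      rw [(cdf ν).measure_Iio (tendsto_cdf_atBot ν), sub_zero]
    _ ≤ ENNReal.ofReal p := ENNReal.ofReal_le_ofReal hleft

section RandomVariable

variable {Ω : Type*} [MeasurableSpace Ω] {μ : Measure Ω} [IsProbabilityMeasure μ] {X : Ω → ℝ}
  {Φ : ℝ → ℝ} {p : ℝ}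

theorem cdf_map_eq (hX : Measurable X) (hΦ : ∀ x, μ.real {ω | X ω ≤ x} = Φ x) :
    ⇑(cdf (μ.map X)) = Φ := by
  have := Measure.isProbabilityMeasure_map (μ := μ) hX.aemeasurable
  ext x
  rw [cdf_eq_real, map_measureReal_apply hX measurableSet_Iic]
  exact hΦ x

theorem exists_geninvE_eq_coe (hX : Measurable X) (hΦ : ∀ x, μ.real {ω | X ω ≤ x} = Φ x)
    (hp : p ∈ Ioo 0 1) : ∃ q : ℝ, geninvE Φ p = q ∧ p ≤ Φ q ∧ ∀ x < q, Φ x < p := by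
  have := Measure.isProbabilityMeasure_map (μ := μ) hX.aemeasurable
  simpa only [cdf_map_eq hX hΦ] using exists_geninvE_cdf_eq_coe (μ.map X) hp

theorem measureReal_preimage_Iio_le (hX : Measurable X)
    (hΦ : ∀ x, μ.real {ω | X ω ≤ x} = Φ x) {q : ℝ} (h : ∀ x < q, Φ x ≤ p) :
    μ.real (X ⁻¹' Iio q) ≤ p := by
  have := Measure.isProbabilityMeasure_map (μ := μ) hX.aemeasurable
  have hp : 0 ≤ p := (hΦ (q - 1) ▸ measureReal_nonneg).trans (h _ (sub_one_lt q))
  rw [← cdf_map_eq hX hΦ] at h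
  rw [← map_measureReal_apply hX measurableSet_Iio]
  exact ENNReal.toReal_le_of_le_ofReal hp (measure_Iio_le_of_forall_lt_cdf_le _ h)

end RandomVariable

theorem exp_neg_two_mul_sq_sqrt_log_two_div {n α : ℝ} (hn : 0 < n) (hα : 0 < α) (hα2 : α ≤ 2) :
    exp (-2 * n * sqrt (log (2 / α) / (2 * n)) ^ 2) = α / 2 := by
  have hlog : 0 ≤ log (2 / α) := log_nonneg ((one_le_div hα).mpr hα2)
  rw [sq_sqrt (by positivity)]
  field_simp
  rw [exp_neg, exp_log (by positivity), inv_div]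
  ring

theorem ofReal_one_sub_le_measure_of_compl_subset {Ω : Type*} [MeasurableSpace Ω] {μ : Measure Ω}
    [IsProbabilityMeasure μ] {E B₁ B₂ B₃ B₄ : Set Ω} {δ : ℝ} (hδ : 0 ≤ δ)
    (h₁ : μ B₁ ≤ ENNReal.ofReal δ) (h₂ : μ B₂ ≤ ENNReal.ofReal δ) (h₃ : μ B₃ ≤ ENNReal.ofReal δ)
    (h₄ : μ B₄ ≤ ENNReal.ofReal δ) (hE : (B₁ ∪ B₂ ∪ B₃ ∪ B₄)ᶜ ⊆ E) :
    ENNReal.ofReal (1 - 4 * δ) ≤ μ E := by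
  have hbad : μ Eᶜ ≤ ENNReal.ofReal (4 * δ) := calc
    μ Eᶜ ≤ μ (B₁ ∪ B₂ ∪ B₃ ∪ B₄) := measure_mono (compl_subset_comm.mp hE)
    _ ≤ μ B₁ + μ B₂ + μ B₃ + μ B₄ := (measure_union_le _ _).trans <|
      add_le_add ((measure_union_le _ _).trans (add_le_add (measure_union_le _ _) le_rfl)) le_rfl
    _ ≤ ENNReal.ofReal δ + ENNReal.ofReal δ + ENNReal.ofReal δ + ENNReal.ofReal δ := by gcongr
    _ = ENNReal.ofReal (4 * δ) := by
      rw [ENNReal.ofReal_mul zero_le_four, ENNReal.ofReal_ofNat]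
      ring
  have hone : 1 ≤ μ E + μ Eᶜ := by
    simpa [union_compl_self] using measure_union_le (μ := μ) E Eᶜ
  rw [ENNReal.ofReal_sub _ (by positivity), ENNReal.ofReal_one, tsub_le_iff_right]
  exact hone.trans (add_le_add le_rfl hbad)

theorem evalE_geninvE_sandwich {F G : ℝ → ℝ} (hG : Monotone G) (hGb : BddBelow (range G))
    (hGa : BddAbove (range G)) {p q φ ε : ℝ} (hFq : p ≤ F q + ε) (hFlt : ∀ x < q, F x < p + ε)
    (hGq : |G q - φ| < ε) :
    evalE G (geninvE (fun x => F x + ε) p) - ε ≤ φ ∧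
      φ ≤ evalE G (geninvE (fun x => F x - ε) p) + ε := by
  obtain ⟨hlo, hhi⟩ := abs_sub_lt_iff.mp hGq
  have hle := evalE_le_of_le_coe hG hGb (geninvE_le_coe (H := fun x => F x + ε) hFq)
  have hge := le_evalE_of_coe_le hG hGa
    (coe_le_geninvE (H := fun x => F x - ε) fun x hx => sub_lt_iff_lt_add.mpr (hFlt x hx))
  constructor <;> linarith

theorem pac_composed_cdf_bound_general
    {Ω : Type*} [MeasurableSpace Ω] (μ : Measure Ω) [IsProbabilityMeasure μ]
    (ΦA ΦB : ℝ → ℝ)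
    (n : ℕ) (hn : 0 < n) (As Bs : Fin n → Ω → ℝ)
    (hAsMeas : ∀ i, Measurable (As i)) (hBsMeas : ∀ i, Measurable (Bs i))
    (hAsIndep : ProbabilityTheory.iIndepFun As μ)
    (hBsIndep : ProbabilityTheory.iIndepFun Bs μ)
    (hAsDist : ∀ (i : Fin n) (x : ℝ), (μ {ω | As i ω ≤ x}).toReal = ΦA x)
    (hBsDist : ∀ (i : Fin n) (x : ℝ), (μ {ω | Bs i ω ≤ x}).toReal = ΦB x)
    (p α ε : ℝ) (hp : p ∈ Set.Ioo (0:ℝ) 1) (hα : α ∈ Set.Ioo (0:ℝ) 1)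
    (hε : ε = Real.sqrt (Real.log (2 / α) / (2 * n))) :
    ENNReal.ofReal (1 - 2 * α) ≤
      μ {ω |
        evalE (empCDF n Bs ω) (geninvE (fun x => empCDF n As ω x + ε) p) - ε ≤
            evalE ΦB (geninvE ΦA p) ∧
          evalE ΦB (geninvE ΦA p) ≤
            evalE (empCDF n Bs ω) (geninvE (fun x => empCDF n As ω x - ε) p) + ε} := by
  obtain ⟨q, hq, hpq, hlt⟩ := exists_geninvE_eq_coe (hAsMeas ⟨0, hn⟩) (hAsDist _) hp
  have hAsIio : ∀ i, μ.real (As i ⁻¹' Iio q) ≤ p := fun i =>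
    measureReal_preimage_Iio_le (hAsMeas i) (hAsDist i) fun x hx => (hlt x hx).le
  have hexp : exp (-2 * n * ε ^ 2) = α / 2 :=
    hε ▸ exp_neg_two_mul_sq_sqrt_log_two_div (Nat.cast_pos.mpr hn) hα.1 (by linarith [hα.2])
  have hε0 : 0 ≤ ε := hε ▸ sqrt_nonneg _
  refine le_trans (le_of_eq (by ring_nf)) (ofReal_one_sub_le_measure_of_compl_subset (δ := α / 2)
    (B₁ := {ω | ε ≤ ΦA q - empFreq n As ω (Iic q)})
    (B₂ := {ω | ε ≤ empFreq n Bs ω (Iic q) - ΦB q})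
    (B₃ := {ω | ε ≤ empFreq n As ω (Iio q) - p})
    (B₄ := {ω | ε ≤ ΦB q - empFreq n Bs ω (Iic q)}) (by linarith [hα.1]) ?_ ?_ ?_ ?_ ?_)
  · exact hexp ▸ measure_le_sub_empFreq_le hAsMeas hAsIndep measurableSet_Iic
      (fun i => (hAsDist i q).ge) hn.ne' hε0
  · exact hexp ▸ measure_le_empFreq_sub_le hBsMeas hBsIndep measurableSet_Iic
      (fun i => (hBsDist i q).le) hn.ne' hε0
  · exact hexp ▸ measure_le_empFreq_sub_le hAsMeas hAsIndep measurableSet_Iio hAsIio hn.ne' hε0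
  · exact hexp ▸ measure_le_sub_empFreq_le hBsMeas hBsIndep measurableSet_Iic
      (fun i => (hBsDist i q).ge) hn.ne' hε0
  intro ω hω
  simp only [mem_compl_iff, mem_union, mem_ofPred_eq, not_or, not_le] at hω
  obtain ⟨⟨⟨h₁, h₂⟩, h₃⟩, h₄⟩ := hω
  rw [hq, evalE_coe]
  refine evalE_geninvE_sandwich (q := q) empCDF_mono bddBelow_range_empCDF bddAbove_range_empCDF
    ?_ ?_ ?_
  · rw [empCDF_eq_empFreq]; linarith
  · exact fun x hx =>
      empCDF_eq_empFreq x ▸ (empFreq_mono (Iic_subset_Iio.mpr hx)).trans_lt (by linarith)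
  · rw [empCDF_eq_empFreq, abs_sub_lt_iff]; constructor <;> linarith

/-- **PAC bound on the composed CDF (Lemma 1 of the paper, with union-bound
confidence `1 - 2α`).** Let `A` and `B` be real random variables with CDFs `ΦA`, `ΦB`,
let `{A_i}` be `n` i.i.d. samples with CDF `ΦA` and `{B_i}` be `n` i.i.d. samples with
CDF `ΦB`, with empirical CDFs `ΦA⁽ⁿ⁾`, `ΦB⁽ⁿ⁾`. Let `p, α ∈ (0,1)` and
`ε = √(ln(2/α)/(2n))`. Then with probability at least `1 - 2α`:
`v̲ ≤ ΦB (ΦA⁻¹(p)) ≤ v̄`, where `v̲ = ΦB⁽ⁿ⁾((ΦA⁽ⁿ⁾ + ε)⁻¹(p)) - ε` and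
`v̄ = ΦB⁽ⁿ⁾((ΦA⁽ⁿ⁾ - ε)⁻¹(p)) + ε`. -/
theorem pac_composed_cdf_bound
    {Ω : Type*} [MeasurableSpace Ω] (μ : Measure Ω) [IsProbabilityMeasure μ]
    (A B : Ω → ℝ) (hA : Measurable A) (hB : Measurable B)
    (ΦA ΦB : ℝ → ℝ)
    (hΦA : ∀ x : ℝ, ΦA x = (μ {ω | A ω ≤ x}).toReal)
    (hΦB : ∀ x : ℝ, ΦB x = (μ {ω | B ω ≤ x}).toReal)
    (n : ℕ) (hn : 0 < n) (As Bs : Fin n → Ω → ℝ)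
    (hAsMeas : ∀ i, Measurable (As i)) (hBsMeas : ∀ i, Measurable (Bs i))
    (hAsIndep : ProbabilityTheory.iIndepFun As μ)
    (hBsIndep : ProbabilityTheory.iIndepFun Bs μ)
    (hAsDist : ∀ (i : Fin n) (x : ℝ), (μ {ω | As i ω ≤ x}).toReal = ΦA x)
    (hBsDist : ∀ (i : Fin n) (x : ℝ), (μ {ω | Bs i ω ≤ x}).toReal = ΦB x)
    (p α ε : ℝ) (hp : p ∈ Set.Ioo (0:ℝ) 1) (hα : α ∈ Set.Ioo (0:ℝ) 1)
    (hε : ε = Real.sqrt (Real.log (2 / α) / (2 * n))) :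
    ENNReal.ofReal (1 - 2 * α) ≤
      μ {ω |
        evalE (empCDF n Bs ω) (geninvE (fun x => empCDF n As ω x + ε) p) - ε ≤
            evalE ΦB (geninvE ΦA p) ∧
          evalE ΦB (geninvE ΦA p) ≤
            evalE (empCDF n Bs ω) (geninvE (fun x => empCDF n As ω x - ε) p) + ε} :=
  pac_composed_cdf_bound_general μ ΦA ΦB n hn As Bs hAsMeas hBsMeas hAsIndep hBsIndep hAsDist
    hBsDist p α ε hp hα hε
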